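/- Let G be a connected graph, let T be a search tree on G, and let (p,c) be an edge of T with p the parent of c. Then the rooted tree obtained by rotating the edge (p,c) in T is again a search tree on G. -/

import Mathlib

/-- A rooted tree (or the empty tree) on a subset `supp` of the vertex type `V`,
represented by parent pointers. -/
structure RTree (V : Type) where
  supp : Finset V
  parent : V → Option V
  parent_eq_none : ∀ v ∉ supp, parent v = none
  mem_of_parent : ∀ {v w : V}, parent v = some w → v ∈ supp ∧ w ∈ supp
  root_unique : ∀ v ∈ supp, ∀ w ∈ supp, parent v = none → parent w = none → v = w
  reaches_root : ∀ v ∈ supp, ∃ r ∈ supp, parent r = none ∧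
    Relation.ReflTransGen (fun a b => parent a = some b) v r

namespace RTree

variable {V : Type}

/-- `T.Anc a v` : `a` is an ancestor of `v` in `T` (possibly `a = v`). -/
def Anc (T : RTree V) (a v : V) : Prop :=
  Relation.ReflTransGen (fun x y => T.parent x = some y) v a

/-- `a` is a strict ancestor of `v`. -/
def StrictAnc (T : RTree V) (a v : V) : Prop := a ≠ v ∧ T.Anc a v

/-- The set of vertices of the subtree rooted at `a` (the descendants of `a`). -/
def descSet (T : RTree V) (a : V) : Set V := {v | T.Anc a v}

/-- The depth of a node: the number of nodes on the path from the root to it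
(the root has depth 1). -/
noncomputable def depth (T : RTree V) (v : V) : ℕ := Set.ncard {a | T.Anc a v}

def IsRoot (T : RTree V) (r : V) : Prop := r ∈ T.supp ∧ T.parent r = none

end RTree

/-- The restriction of a graph to a set of vertices (keeping the ambient vertex type). -/
def restrictG {V : Type} (G : SimpleGraph V) (U : Set V) : SimpleGraph V where
  Adj a b := G.Adj a b ∧ a ∈ U ∧ b ∈ U
  symm := ⟨fun a b ⟨h, ha, hb⟩ => ⟨h.symm, hb, ha⟩⟩
  loopless := ⟨fun a ⟨h, _, _⟩ => G.irrefl h⟩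

/-- `T` is a search tree on the induced subgraph `G[U]`: its nodes are the vertices of `U`,
the subtree of every node induces a connected subgraph, and every edge of `G[U]` joins
two comparable nodes of `T`. -/
def IsSTGOn {V : Type} (G : SimpleGraph V) (U : Finset V) (T : RTree V) : Prop :=
  T.supp = U ∧
  (∀ v ∈ U, ((restrictG G ↑U).induce (T.descSet v)).Connected) ∧
  (∀ u v : V, u ∈ U → v ∈ U → G.Adj u v → T.Anc u v ∨ T.Anc v u)

/-- `T` is a search tree on the graph `G`. -/
def IsSTG {V : Type} [Fintype V] (G : SimpleGraph V) (T : RTree V) : Prop :=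
  IsSTGOn G Finset.univ T

/-- `T'` is obtained from `T` by rotating the edge `(p, c)` of `T`, where `p` is
the parent of `c`: `c` replaces `p` (becoming a child of `p`'s former parent, or the
root if `p` was the root), `p` becomes a child of `c`, `p` keeps its other children,
and each child `x` of `c` whose subtree contains a vertex of `G` adjacent to `p`
becomes a child of `p` (the other children of `c` stay children of `c`). -/
def IsRotationAt {V : Type} (G : SimpleGraph V) (T T' : RTree V) (p c : V) : Prop :=
  T.parent c = some p ∧
  T'.supp = T.supp ∧
  T'.parent c = T.parent p ∧
  T'.parent p = some c ∧
  (∀ x : V, x ≠ p → T.parent x = some c →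
    ((∃ u ∈ T.descSet x, G.Adj u p) → T'.parent x = some p) ∧
    (¬(∃ u ∈ T.descSet x, G.Adj u p) → T'.parent x = some c)) ∧
  (∀ x : V, x ≠ c → x ≠ p → T.parent x ≠ some c → T'.parent x = T.parent x)

/-- `T'` is obtained from `T` by a single rotation. -/
def IsRotation {V : Type} (G : SimpleGraph V) (T T' : RTree V) : Prop :=
  ∃ p c, IsRotationAt G T T' p c

/-- `T2` can be obtained from `T1` by exactly `k` rotations. -/
def ReachesIn {V : Type} (G : SimpleGraph V) : ℕ → RTree V → RTree V → Prop
  | 0, T1, T2 => T1 = T2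
  | k+1, T1, T2 => ∃ T', IsRotation G T1 T' ∧ ReachesIn G k T' T2

/-- Vertex type of the caterpillar `C(m_1, …, m_n)`: spine vertices `inl i` and
leg vertices `inr ⟨i, j⟩`. -/
abbrev CatV (n : ℕ) (m : Fin n → ℕ) : Type := Fin n ⊕ (Σ i : Fin n, Fin (m i))

/-- The caterpillar tree `C(m_1, …, m_n)`: the spine `s_1 - s_2 - ⋯ - s_n` is a path,
and leg `ℓ_{i,j}` is adjacent to `s_i`. -/
def caterpillar (n : ℕ) (m : Fin n → ℕ) : SimpleGraph (CatV n m) where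
  Adj x y :=
    match x, y with
    | Sum.inl i, Sum.inl j => i.val + 1 = j.val ∨ j.val + 1 = i.val
    | Sum.inl i, Sum.inr l => l.1 = i
    | Sum.inr l, Sum.inl i => l.1 = i
    | Sum.inr _, Sum.inr _ => False
  symm := ⟨by rintro (i | l) (j | l') h <;> simp_all <;> tauto⟩
  loopless := ⟨by rintro (i | l) h <;> simp_all⟩

/-- The (base 2) Shannon entropy `H(m_1, …, m_n) = ∑_{i : m_i > 0} (m_i/m) log (m/m_i)`. -/
noncomputable def shannonH {n : ℕ} (m : Fin n → ℕ) : ℝ :=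
  ∑ i, if 0 < m i then
    ((m i : ℝ) / (∑ j, (m j : ℝ))) * Real.logb 2 ((∑ j, (m j : ℝ)) / (m i : ℝ))
  else 0

/-- The parent function of the search tree `A(S, π)` on the caterpillar: the legs form a
path at the top of the tree, ordered bottom-to-top according to `π`, and the spine nodes
hang below, arranged according to the BST `S`. -/
def AParent {n : ℕ} {m : Fin n → ℕ} (S : RTree (Fin n))
    (π : Fin (∑ i, m i) ≃ (Σ i : Fin n, Fin (m i))) :
    CatV n m → Option (CatV n m) :=
  fun x => match x with
  | Sum.inl i =>
      match S.parent i with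
      | some j => some (Sum.inl j)
      | none => if h : 0 < ∑ i, m i then some (Sum.inr (π ⟨0, h⟩)) else none
  | Sum.inr l =>
      if h : (π.symm l).val + 1 < ∑ i, m i then
        some (Sum.inr (π ⟨(π.symm l).val + 1, h⟩))
      else none

/-- `T = A(S, π)`. -/
def IsA {n : ℕ} {m : Fin n → ℕ} (S : RTree (Fin n))
    (π : Fin (∑ i, m i) ≃ (Σ i : Fin n, Fin (m i))) (T : RTree (CatV n m)) : Prop :=
  T.supp = Finset.univ ∧ T.parent = AParent S π

/-- The parent function of the search tree `B(S)` on the caterpillar: every leg `ℓ_{i,j}`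
is a (childless) child of `s_i`, and the spine nodes are arranged according to `S`. -/
def BParent {n : ℕ} {m : Fin n → ℕ} (S : RTree (Fin n)) :
    CatV n m → Option (CatV n m) :=
  fun x => match x with
  | Sum.inl i => (S.parent i).map Sum.inl
  | Sum.inr l => some (Sum.inl l.1)

/-- `T = B(S)`. -/
def IsB {n : ℕ} {m : Fin n → ℕ} (S : RTree (Fin n)) (T : RTree (CatV n m)) : Prop :=
  T.supp = Finset.univ ∧ T.parent = BParent S

/-- `σ(π)`: the sequence of spine indices obtained from the leg ordering `π` by replacing
each leg `ℓ_{i,j}` with `i`. -/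
def sigmaOf {n : ℕ} {m : Fin n → ℕ}
    (π : Fin (∑ i, m i) ≃ (Σ i : Fin n, Fin (m i))) : List (Fin n) :=
  List.ofFn (fun j => (π j).1)

/-- Every leg node of `T` is bound, i.e. no leg node has a child. -/
def noFreeLegs {n : ℕ} {m : Fin n → ℕ} (T : RTree (CatV n m)) : Prop :=
  ∀ (x : CatV n m) (l : Σ i : Fin n, Fin (m i)), T.parent x ≠ some (Sum.inr l)

open Classical in
/-- The number of adjacent pairs in a list satisfying `P`. -/
noncomputable def pairAlt {α : Type} (P : α → α → Prop) : List α → ℕ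
  | [] => 0
  | [_] => 0
  | a :: b :: t => (if P a b then 1 else 0) + pairAlt P (b :: t)

open Classical in
/-- Wilber's quantity `λ(S, u, σ)`: 0 if `u` has at most one child; otherwise the number
of adjacent pairs in the restriction of `σ` to the subtree of `u` that do not both lie in
the subtree of one child of `u` and are not both equal to `u`. -/
noncomputable def wilberLam {n : ℕ} (S : RTree (Fin n)) (u : Fin n) (σ : List (Fin n)) : ℕ :=
  if (∃ v w : Fin n, v ≠ w ∧ S.parent v = some u ∧ S.parent w = some u) then
    pairAlt (fun x y =>
      ¬((x = u ∧ y = u) ∨ ∃ ch, S.parent ch = some u ∧ S.Anc ch x ∧ S.Anc ch y))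
      (σ.filter (fun x => decide (S.Anc u x)))
  else 0

/-- `λ'(S, u, σ) = λ(S, u, σ)` plus the number of occurrences of `u` in `σ`. -/
noncomputable def wilberLam' {n : ℕ} (S : RTree (Fin n)) (u : Fin n)
    (σ : List (Fin n)) : ℕ :=
  wilberLam S u σ + σ.count u

/-- Wilber's first lower bound `Λ'(S, σ) = ∑_u λ'(S, u, σ)`. -/
noncomputable def wilberL' {n : ℕ} (S : RTree (Fin n)) (σ : List (Fin n)) : ℕ :=
  ∑ u : Fin n, wilberLam' S u σ

/-- `P` is the projection `T[U]` of `T` onto `U`: its nodes are the nodes of `T` in `U`,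
and the parent of `u` in `P` is the nearest strict ancestor of `u` in `T` that lies
in `U` (which is exactly the result of pruning the vertices outside `U` one by one). -/
def IsProjOn {V : Type} [DecidableEq V] (T : RTree V) (U : Finset V) (P : RTree V) : Prop :=
  P.supp = T.supp ∩ U ∧
  ∀ u w : V, P.parent u = some w ↔
    (u ∈ U ∧ w ∈ U ∧ T.StrictAnc w u ∧ ∀ z ∈ U, T.StrictAnc z u → T.Anc z w)

/-- `P` is obtained from `T` by pruning the vertex `v`. -/
def IsPruneOf {V : Type} [DecidableEq V] (T : RTree V) (v : V) (P : RTree V) : Prop :=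
  IsProjOn T (T.supp.erase v) P

/-- `PruneSeq T l P`: `P` is obtained from `T` by successively pruning the
vertices in the list `l`, in order. -/
def PruneSeq {V : Type} [DecidableEq V] : RTree V → List V → RTree V → Prop
  | T, [], P => P = T
  | T, v :: rest, P => ∃ P', IsPruneOf T v P' ∧ PruneSeq P' rest P

/-- The number of alternations (edges whose endpoints get different colors under `f`)
on the path from the root to `z`. -/
noncomputable def altAt {V K : Type} (f : V → K) (T : RTree V) (z : V) : ℕ :=
  Set.ncard {x | T.Anc x z ∧ ∃ y, T.parent x = some y ∧ f x ≠ f y}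

/-- The alternation number of `T` w.r.t. the coloring `f`: the maximum number of
alternations on a root-to-node path. -/
noncomputable def altNum {V K : Type} (f : V → K) (T : RTree V) : ℕ :=
  T.supp.sup (fun z => altAt f T z)

/-!
Rotating `(p, c)` changes only two subtrees: the new subtree of `c` is the old subtree of `p`,
and the new subtree of `p` is the old one minus the subtree of `c`, together with the subtrees of
those children of `c` that contain a neighbour of `p`. The first is connected as before. Since
edges join comparable nodes, every edge from the subtree of `c` to the rest of the subtree of `p`
ends at `p`, so removing the subtree of `c` leaves a connected set containing `p`, and every
reattached subtree is connected and has an edge to `p`. Comparability of adjacent nodes can only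
fail for an edge from `p` into the subtree of `c`, and such an edge lands in a reattached subtree.
-/

theorem SimpleGraph.connected_induce_diff {V : Type} {G : SimpleGraph V} {s t : Set V} {p : V}
    (hs : (G.induce s).Connected) (hp : p ∈ s \ t)
    (hfrontier : ∀ a ∈ s \ t, ∀ b ∈ t, G.Adj a b → a = p) :
    (G.induce (s \ t)).Connected := by
  have toP : ∀ (x y : s) (_ : (G.induce s).Walk x y) (hx : x.1 ∉ t), y.1 = p →
      (G.induce (s \ t)).Reachable ⟨x, x.2, hx⟩ ⟨p, hp⟩ := by
    intro x y w
    induction w with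
    | @nil x =>
      intro hx hy
      have hxp : (⟨x, x.2, hx⟩ : ↥(s \ t)) = ⟨p, hp⟩ := Subtype.ext hy
      exact hxp ▸ .refl _
    | @cons x z y hxz _ ih =>
      intro hx hy
      by_cases hz : z.1 ∈ t
      · have hxp : (⟨x, x.2, hx⟩ : ↥(s \ t)) = ⟨p, hp⟩ :=
          Subtype.ext (hfrontier x ⟨x.2, hx⟩ z hz hxz)
        exact hxp ▸ .refl _
      · exact (SimpleGraph.Adj.reachable (G := G.induce (s \ t))
          (u := ⟨x, x.2, hx⟩) (v := ⟨z, z.2, hz⟩) hxz).trans (ih hz hy)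
  refine (SimpleGraph.connected_iff_exists_forall_reachable _).2
    ⟨⟨p, hp⟩, fun ⟨v, hv⟩ => ?_⟩
  obtain ⟨w⟩ := hs.preconnected ⟨v, hv.1⟩ ⟨p, hp.1⟩
  exact (toP _ _ w hv.2 rfl).symm

namespace RTree

open Relation

variable {V : Type} {G : SimpleGraph V} {T : RTree V} {a b c p r u v w x y : V}

theorem anc_of_parent (h : T.parent v = some a) : T.Anc a v :=
  .single h

theorem Anc.trans (hab : T.Anc a b) (hbv : T.Anc b v) : T.Anc a v :=
  ReflTransGen.trans hbv hab

theorem Anc.anc_of_parent_eq (h : T.Anc a v) (hne : a ≠ v) (hv : T.parent v = some w) :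
    T.Anc a w := by
  rcases ReflTransGen.cases_head h with rfl | ⟨w', hw', hw'a⟩
  · exact absurd rfl hne
  · rwa [Option.some.inj (hv.symm.trans hw')]

theorem Anc.exists_child (h : T.Anc a v) (hne : a ≠ v) :
    ∃ x, T.parent x = some a ∧ T.Anc x v := by
  rcases ReflTransGen.cases_tail h with rfl | ⟨x, hvx, hx⟩
  · exact absurd rfl hne
  · exact ⟨x, hx, hvx⟩

theorem Anc.total (ha : T.Anc a v) (hb : T.Anc b v) : T.Anc a b ∨ T.Anc b a := by
  induction ha using ReflTransGen.head_induction_on with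
  | refl => exact .inr hb
  | head hv _ ih =>
    rcases ReflTransGen.cases_head hb with rfl | ⟨w', hw', hw'b⟩
    · exact .inl (ReflTransGen.head hv ‹_›)
    · exact ih (by rwa [Option.some.inj (hw'.symm.trans hv)] at hw'b)

theorem parent_ne_self (x : V) : T.parent x ≠ some x := by
  intro hx
  obtain ⟨r, -, hr, hxr⟩ := T.reaches_root x (T.mem_of_parent hx).1
  have stuck : ∀ y, ReflTransGen (fun a b => T.parent a = some b) x y → y = x := by
    intro y hy
    induction hy with
    | refl => rfl
    | tail _ hstep ih => subst ih; exact Option.some.inj (hstep.symm.trans hx)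
  rw [stuck r hxr, hx] at hr
  exact Option.some_ne_none x hr

theorem Anc.antisymm (hab : T.Anc a b) (hba : T.Anc b a) : a = b := by
  rcases ReflTransGen.cases_head hab with rfl | ⟨w, hw, -⟩
  · rfl
  obtain ⟨r, -, hr, hbr⟩ := T.reaches_root b (T.mem_of_parent hw).1
  clear hw
  induction hbr using ReflTransGen.head_induction_on generalizing a with
  | refl =>
    rcases ReflTransGen.cases_head hab with rfl | ⟨w, hw, -⟩
    · rfl
    · simp [hw] at hr
  | @head b b' hstep _ ih =>
    rcases ReflTransGen.cases_head hab with rfl | ⟨w, hw, hwa⟩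
    · rfl
    rw [Option.some.inj (hw.symm.trans hstep)] at hwa
    obtain rfl : a = b' := ih hwa (ReflTransGen.tail hba hstep)
    exact (ih hba (anc_of_parent hstep)).symm

theorem ne_of_parent_eq (h : T.parent c = some p) : c ≠ p := by
  rintro rfl
  exact T.parent_ne_self c h

theorem not_anc_of_parent_eq (h : T.parent c = some p) : ¬ T.Anc c p :=
  fun hcp => ne_of_parent_eq h (hcp.antisymm (anc_of_parent h))

theorem not_anc_of_parent_eq_parent (hx : T.parent x = some a) (hy : T.parent y = some a)
    (hxy : x ≠ y) : ¬ T.Anc x y := by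
  intro hxy'
  obtain rfl := (hxy'.anc_of_parent_eq hxy hy).antisymm (anc_of_parent hx)
  exact T.parent_ne_self x hx

theorem disjoint_descSet_of_parent_eq_parent (hx : T.parent x = some a)
    (hy : T.parent y = some a) (hxy : x ≠ y) : Disjoint (T.descSet x) (T.descSet y) :=
  Set.disjoint_left.2 fun _ hvx hvy => (Anc.total hvx hvy).elim
    (not_anc_of_parent_eq_parent hx hy hxy) (not_anc_of_parent_eq_parent hy hx hxy.symm)

theorem descSet_subset_supp (hx : x ∈ T.supp) : T.descSet x ⊆ T.supp := by
  intro v hv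
  rcases ReflTransGen.cases_head (show T.Anc x v from hv) with rfl | ⟨w, hw, -⟩
  · exact hx
  · exact (T.mem_of_parent hw).1

theorem parent_ne_of_parent_eq (h : T.parent c = some p) : T.parent p ≠ some c :=
  fun hp => not_anc_of_parent_eq h (anc_of_parent hp)

theorem descSet_subset_of_anc (h : T.Anc a x) : T.descSet x ⊆ T.descSet a :=
  fun _ hv => h.trans hv

theorem eq_of_adj_of_mem_descSet_diff {H : SimpleGraph V}
    (hcomp : ∀ u v, H.Adj u v → T.Anc u v ∨ T.Anc v u) (hpc : T.parent c = some p)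
    (ha : a ∈ T.descSet p \ T.descSet c) (hb : b ∈ T.descSet c) (hab : H.Adj a b) : a = p := by
  have hca : ¬ T.Anc c a := ha.2
  rcases hcomp a b hab with hab | hba
  · rcases Anc.total hab hb with hac | hca'
    · have hne : a ≠ c := by rintro rfl; exact hca .refl
      exact (hac.anc_of_parent_eq hne hpc).antisymm ha.1
    · exact absurd hca' hca
  · exact absurd ((show T.Anc c b from hb).trans hba) hca

open Classical in
noncomputable def rotParent (T : RTree V) (G : SimpleGraph V) (p c x : V) : Option V :=
  if x = c then T.parent p
  else if x = p then some c
  else if T.parent x = some c then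
    if ∃ u ∈ T.descSet x, G.Adj u p then some p else some c
  else T.parent x

theorem rotParent_self_right : T.rotParent G p c c = T.parent p :=
  if_pos rfl

theorem rotParent_self_left (hpc : T.parent c = some p) : T.rotParent G p c p = some c := by
  simp [rotParent, (ne_of_parent_eq hpc).symm]

theorem rotParent_of_adj (hpc : T.parent c = some p) (hx : T.parent x = some c)
    (hadj : ∃ u ∈ T.descSet x, G.Adj u p) : T.rotParent G p c x = some p := by
  have hxp : x ≠ p := by rintro rfl; exact parent_ne_of_parent_eq hpc hx
  simp [rotParent, ne_of_parent_eq hx, hxp, hx, hadj]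

theorem rotParent_of_not_adj (hpc : T.parent c = some p) (hx : T.parent x = some c)
    (hadj : ¬ ∃ u ∈ T.descSet x, G.Adj u p) : T.rotParent G p c x = some c := by
  have hxp : x ≠ p := by rintro rfl; exact parent_ne_of_parent_eq hpc hx
  simp only [rotParent, ne_of_parent_eq hx, hxp, hx, if_false, if_true, if_neg hadj]

theorem rotParent_of_ne (hxc : x ≠ c) (hxp : x ≠ p) (hx : T.parent x ≠ some c) :
    T.rotParent G p c x = T.parent x := by
  simp [rotParent, hxc, hxp, hx]

theorem rotParent_eq_some (h : T.rotParent G p c x = some w) :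
    (x = c ∧ T.parent p = some w) ∨ (x = p ∧ w = c) ∨
    (T.parent x = some c ∧ ((∃ u ∈ T.descSet x, G.Adj u p) ∧ w = p ∨ w = c)) ∨
    (x ≠ c ∧ x ≠ p ∧ T.parent x ≠ some c ∧ T.parent x = some w) := by
  unfold rotParent at h
  split_ifs at h <;> grind

theorem rotParent_eq_none (h : T.rotParent G p c x = none) :
    (x = c ∧ T.parent p = none) ∨ (x ≠ c ∧ x ≠ p ∧ T.parent x = none) := by
  unfold rotParent at h
  split_ifs at h <;> grind

/-- The ancestor relation of the rotated parent function, needed before `rotate` is shown to be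
a tree; afterwards it is `(T.rotate G hpc).Anc`. -/
def RotAnc (T : RTree V) (G : SimpleGraph V) (p c a v : V) : Prop :=
  ReflTransGen (fun x y => T.rotParent G p c x = some y) v a

theorem rotAnc_refl : T.RotAnc G p c a a :=
  .refl

theorem rotAnc_of_rotParent (h : T.rotParent G p c v = some a) : T.RotAnc G p c a v :=
  .single h

theorem RotAnc.trans (hab : T.RotAnc G p c a w) (hwv : T.RotAnc G p c w v) :
    T.RotAnc G p c a v :=
  ReflTransGen.trans hwv hab

theorem rotParent_update_eq_none [DecidableEq V] (hpc : T.parent c = some p)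
    (hr : T.parent r = none) : T.rotParent G p c (Function.update id p c r) = none := by
  rcases eq_or_ne r p with rfl | hrp
  · simpa [rotParent_self_right] using hr
  · have hrc : r ≠ c := by rintro rfl; simp [hpc] at hr
    simpa [hrp, rotParent_of_ne (G := G) hrc hrp (by rw [hr]; simp)] using hr

/-- `Function.update id p c` renames `p` to `c`, the node that takes over its position. -/
theorem rotAnc_update_of_parent_eq [DecidableEq V] (hpc : T.parent c = some p)
    (h : T.parent x = some w) :
    T.RotAnc G p c (Function.update id p c w) (Function.update id p c x) := by
  have hcp := ne_of_parent_eq hpc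
  have toC : T.RotAnc G p c c p := rotAnc_of_rotParent (rotParent_self_left hpc)
  by_cases hxc : x = c
  · subst hxc
    obtain rfl := Option.some.inj (h.symm.trans hpc)
    rw [Function.update_self, Function.update_of_ne hcp]
    exact rotAnc_refl
  by_cases hxp : x = p
  · subst hxp
    have hwx : w ≠ x := fun hwx => T.parent_ne_self x (hwx ▸ h)
    simpa [hwx] using rotAnc_of_rotParent (G := G) (rotParent_self_right.trans h)
  by_cases hx : T.parent x = some c
  · obtain rfl := Option.some.inj (h.symm.trans hx)
    simp only [Function.update_of_ne hxp, Function.update_of_ne hcp, id]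
    by_cases hadj : ∃ u ∈ T.descSet x, G.Adj u p
    · exact toC.trans (rotAnc_of_rotParent (rotParent_of_adj hpc hx hadj))
    · exact rotAnc_of_rotParent (rotParent_of_not_adj hpc hx hadj)
  · have step := rotAnc_of_rotParent ((rotParent_of_ne (G := G) hxc hxp hx).trans h)
    by_cases hwp : w = p
    · subst hwp
      simpa [hxp] using toC.trans step
    · simpa [hxp, hwp] using step

theorem rotAnc_update_of_anc [DecidableEq V] (hpc : T.parent c = some p) (h : T.Anc a v) :
    T.RotAnc G p c (Function.update id p c a) v := by
  have hv : T.RotAnc G p c (Function.update id p c v) v := by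
    rcases eq_or_ne v p with rfl | hvp
    · simpa using rotAnc_of_rotParent (G := G) (rotParent_self_left hpc)
    · simpa [hvp] using rotAnc_refl
  exact RotAnc.trans (ReflTransGen.lift' (Function.update id p c)
    (fun _ _ hxw => rotAnc_update_of_parent_eq hpc hxw) _ _ h) hv

theorem rotParent_eq_none_of_not_mem (hpc : T.parent c = some p) (hv : v ∉ T.supp) :
    T.rotParent G p c v = none := by
  have hvc : v ≠ c := fun h => hv (h ▸ (T.mem_of_parent hpc).1)
  have hvp : v ≠ p := fun h => hv (h ▸ (T.mem_of_parent hpc).2)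
  have hnone := T.parent_eq_none v hv
  rw [rotParent_of_ne hvc hvp (by simp [hnone]), hnone]

theorem mem_supp_of_rotParent_eq_some (hpc : T.parent c = some p)
    (h : T.rotParent G p c v = some w) : v ∈ T.supp ∧ w ∈ T.supp := by
  have hc := T.mem_of_parent hpc
  rcases rotParent_eq_some h with
    ⟨rfl, hw⟩ | ⟨rfl, rfl⟩ | ⟨hv, ⟨-, rfl⟩ | rfl⟩ | ⟨-, -, -, hv⟩
  · exact ⟨hc.1, (T.mem_of_parent hw).2⟩
  · exact hc.symm
  · exact ⟨(T.mem_of_parent hv).1, hc.2⟩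
  · exact ⟨(T.mem_of_parent hv).1, hc.1⟩
  · exact T.mem_of_parent hv

theorem eq_of_rotParent_eq_none (hpc : T.parent c = some p) (hv : v ∈ T.supp) (hw : w ∈ T.supp)
    (hv' : T.rotParent G p c v = none) (hw' : T.rotParent G p c w = none) : v = w := by
  have hp := (T.mem_of_parent hpc).2
  rcases rotParent_eq_none hv' with ⟨rfl, hpr⟩ | ⟨-, hvp, hvr⟩ <;>
    rcases rotParent_eq_none hw' with ⟨rfl, hpr'⟩ | ⟨-, hwp, hwr⟩
  · rfl
  · exact absurd (T.root_unique w hw p hp hwr hpr) hwp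
  · exact absurd (T.root_unique v hv p hp hvr hpr') hvp
  · exact T.root_unique v hv w hw hvr hwr

noncomputable def rotate (T : RTree V) (G : SimpleGraph V) (hpc : T.parent c = some p) :
    RTree V where
  supp := T.supp
  parent := T.rotParent G p c
  parent_eq_none _ hv := rotParent_eq_none_of_not_mem hpc hv
  mem_of_parent h := mem_supp_of_rotParent_eq_some hpc h
  root_unique _ hv _ hw := eq_of_rotParent_eq_none hpc hv hw
  reaches_root v hv := by
    classical
    obtain ⟨r, hr, hroot, hvr⟩ := T.reaches_root v hv
    refine ⟨Function.update id p c r, ?_, rotParent_update_eq_none hpc hroot,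
      rotAnc_update_of_anc hpc hvr⟩
    rcases eq_or_ne r p with rfl | hrp
    · simpa using (T.mem_of_parent hpc).1
    · simpa [hrp] using hr

theorem isRotationAt_rotate (hpc : T.parent c = some p) :
    IsRotationAt G T (T.rotate G hpc) p c :=
  ⟨hpc, rfl, rotParent_self_right, rotParent_self_left hpc,
    fun _ _ hx => ⟨rotParent_of_adj hpc hx, rotParent_of_not_adj hpc hx⟩,
    fun _ hxc hxp hx => rotParent_of_ne hxc hxp hx⟩

open Classical in
/-- The subtree of `a` after the rotation, see `descSet_rotate`. -/
def rotDescSet (T : RTree V) (G : SimpleGraph V) (p c a : V) : Set V :=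
  if a = c then T.descSet p
  else if a = p then T.descSet p \ T.descSet c ∪
    {v | ∃ x, T.parent x = some c ∧ (∃ u ∈ T.descSet x, G.Adj u p) ∧ v ∈ T.descSet x}
  else T.descSet a

theorem rotDescSet_self_right : T.rotDescSet G p c c = T.descSet p :=
  if_pos rfl

theorem rotDescSet_self_left (hpc : T.parent c = some p) :
    T.rotDescSet G p c p = T.descSet p \ T.descSet c ∪
      {v | ∃ x, T.parent x = some c ∧ (∃ u ∈ T.descSet x, G.Adj u p) ∧ v ∈ T.descSet x} := by
  simp [rotDescSet, (ne_of_parent_eq hpc).symm]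

theorem rotDescSet_of_ne (hac : a ≠ c) (hap : a ≠ p) : T.rotDescSet G p c a = T.descSet a := by
  simp [rotDescSet, hac, hap]

theorem mem_rotDescSet_self (hpc : T.parent c = some p) : v ∈ T.rotDescSet G p c v := by
  by_cases hvc : v = c
  · subst hvc
    rw [rotDescSet_self_right]
    exact anc_of_parent hpc
  by_cases hvp : v = p
  · subst hvp
    rw [rotDescSet_self_left hpc]
    exact .inl ⟨ReflTransGen.refl, not_anc_of_parent_eq hpc⟩
  · rw [rotDescSet_of_ne hvc hvp]
    exact ReflTransGen.refl

theorem rotDescSet_subset_of_rotParent (hpc : T.parent c = some p)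
    (h : T.rotParent G p c b = some a) : T.rotDescSet G p c b ⊆ T.rotDescSet G p c a := by
  have hcp_sub : T.descSet c ⊆ T.descSet p := descSet_subset_of_anc (anc_of_parent hpc)
  rcases rotParent_eq_some h with
    ⟨hbc, hpa⟩ | ⟨hbp, hac⟩ | ⟨hbc, ⟨hadj, hap⟩ | hac⟩ | ⟨hbc, hbp, hbc', hba⟩
  · have hac : a ≠ c := fun hac => parent_ne_of_parent_eq hpc (hac ▸ hpa)
    have hap : a ≠ p := fun hap => T.parent_ne_self p (hap ▸ hpa)
    rw [hbc, rotDescSet_self_right, rotDescSet_of_ne hac hap]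
    exact descSet_subset_of_anc (anc_of_parent hpa)
  · rw [hbp, hac, rotDescSet_self_left hpc, rotDescSet_self_right]
    rintro v (⟨hv, -⟩ | ⟨x, hx, -, hv⟩)
    · exact hv
    · exact hcp_sub (descSet_subset_of_anc (anc_of_parent hx) hv)
  · have hbp : b ≠ p := fun hbp => parent_ne_of_parent_eq hpc (hbp ▸ hbc)
    rw [hap, rotDescSet_self_left hpc, rotDescSet_of_ne (ne_of_parent_eq hbc) hbp]
    exact fun v hv => .inr ⟨b, hbc, hadj, hv⟩
  · have hbp : b ≠ p := fun hbp => parent_ne_of_parent_eq hpc (hbp ▸ hbc)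
    rw [hac, rotDescSet_self_right, rotDescSet_of_ne (ne_of_parent_eq hbc) hbp]
    exact hcp_sub.trans' (descSet_subset_of_anc (anc_of_parent hbc))
  · have hac : a ≠ c := by rintro rfl; exact hbc' hba
    rw [rotDescSet_of_ne hbc hbp]
    by_cases hap : a = p
    · rw [hap, rotDescSet_self_left hpc]
      rw [hap] at hba
      exact fun v hv => .inl ⟨descSet_subset_of_anc (anc_of_parent hba) hv,
        Set.disjoint_left.1 (disjoint_descSet_of_parent_eq_parent hba hpc hbc) hv⟩
    · rw [rotDescSet_of_ne hac hap]
      exact descSet_subset_of_anc (anc_of_parent hba)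

theorem rotAnc_of_anc_of_not_anc (hpc : T.parent c = some p) (hv : T.Anc p v)
    (hcv : ¬ T.Anc c v) : T.RotAnc G p c p v := by
  induction hv using ReflTransGen.head_induction_on with
  | refl => exact rotAnc_refl
  | @head v b hvb _ ih =>
    rcases eq_or_ne v p with rfl | hvp
    · exact rotAnc_refl
    have hvc : v ≠ c := by rintro rfl; exact hcv .refl
    have hv : T.parent v ≠ some c := fun h => hcv (anc_of_parent h)
    exact (ih fun hcb => hcv (hcb.trans (anc_of_parent hvb))).trans
      (rotAnc_of_rotParent ((rotParent_of_ne hvc hvp hv).trans hvb))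

theorem descSet_rotate (hpc : T.parent c = some p) :
    (T.rotate G hpc).descSet a = T.rotDescSet G p c a := by
  classical
  ext v
  constructor
  · intro hv
    change T.RotAnc G p c a v at hv
    induction hv with
    | refl => exact mem_rotDescSet_self hpc
    | tail _ hba ih => exact rotDescSet_subset_of_rotParent hpc hba ih
  · intro hv
    show T.RotAnc G p c a v
    by_cases hac : a = c
    · rw [hac, rotDescSet_self_right] at hv
      simpa [hac] using rotAnc_update_of_anc (G := G) hpc hv
    by_cases hap : a = p
    · rw [hap, rotDescSet_self_left hpc] at hv
      rw [hap]
      rcases hv with ⟨hpv, hcv⟩ | ⟨x, hxc, hadj, hxv⟩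
      · exact rotAnc_of_anc_of_not_anc hpc hpv hcv
      · have hxp : x ≠ p := fun hxp => parent_ne_of_parent_eq hpc (hxp ▸ hxc)
        exact (rotAnc_of_rotParent (rotParent_of_adj hpc hxc hadj)).trans
          (by simpa [hxp] using rotAnc_update_of_anc (G := G) hpc hxv)
    · rw [rotDescSet_of_ne hac hap] at hv
      simpa [hap] using rotAnc_update_of_anc (G := G) hpc hv

theorem anc_rotate_or_anc_rotate (hpc : T.parent c = some p) (huv : G.Adj u v)
    (h : T.Anc u v) : (T.rotate G hpc).Anc u v ∨ (T.rotate G hpc).Anc v u := by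
  change v ∈ (T.rotate G hpc).descSet u ∨ u ∈ (T.rotate G hpc).descSet v
  rw [descSet_rotate, descSet_rotate]
  by_cases huc : u = c
  · rw [huc, rotDescSet_self_right]
    exact .inl ((anc_of_parent hpc).trans (huc ▸ h))
  by_cases hup : u = p
  · subst hup
    rcases eq_or_ne v c with rfl | hvc
    · rw [rotDescSet_self_right]
      exact .inr .refl
    rw [rotDescSet_self_left hpc]
    by_cases hcv : T.Anc c v
    · obtain ⟨x, hxc, hxv⟩ := hcv.exists_child (Ne.symm hvc)
      exact .inl (.inr ⟨x, hxc, ⟨v, hxv, huv.symm⟩, hxv⟩)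
    · exact .inl (.inl ⟨h, hcv⟩)
  · rw [rotDescSet_of_ne huc hup]
    exact .inl h

end RTree

section SearchTree

open RTree

variable {V : Type} {G : SimpleGraph V} {U : Finset V} {T : RTree V} {p c : V}

theorem IsSTGOn.connected_induce_rotDescSet_self_left (hT : IsSTGOn G U T)
    (hpc : T.parent c = some p) :
    ((restrictG G ↑U).induce (T.rotDescSet G p c p)).Connected := by
  obtain ⟨hsupp, hconn, hcomp⟩ := hT
  have mem_U : ∀ {x}, x ∈ T.descSet p → x ∈ U := fun hx =>
    hsupp ▸ T.descSet_subset_supp (T.mem_of_parent hpc).2 hx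
  have hp : p ∈ T.descSet p \ T.descSet c := ⟨.refl, not_anc_of_parent_eq hpc⟩
  have hdiff : ((restrictG G ↑U).induce (T.descSet p \ T.descSet c)).Connected :=
    SimpleGraph.connected_induce_diff (hconn p (mem_U .refl)) hp fun _ ha _ hb hab =>
      eq_of_adj_of_mem_descSet_diff (H := restrictG G ↑U)
        (fun u v h => hcomp u v h.2.1 h.2.2 h.1) hpc ha hb hab
  have hsub : T.descSet p \ T.descSet c ⊆ T.rotDescSet G p c p := by
    rw [rotDescSet_self_left hpc]
    exact Set.subset_union_left
  refine SimpleGraph.induce_connected_of_patches p (hsub hp) fun {v} hv => ?_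
  rw [rotDescSet_self_left hpc] at hv
  rcases hv with hv | ⟨x, hxc, ⟨u, hux, hup⟩, hxv⟩
  · exact ⟨_, hsub, hp, hv, hdiff.preconnected _ _⟩
  · have hpx : T.Anc p x := (anc_of_parent hpc).trans (anc_of_parent hxc)
    have hup' : (restrictG G ↑U).Adj u p := ⟨hup, mem_U (hpx.trans hux), mem_U .refl⟩
    have hsub' : T.descSet x ⊆ T.rotDescSet G p c p := by
      rw [rotDescSet_self_left hpc]
      exact fun w hw => .inr ⟨x, hxc, ⟨u, hux, hup⟩, hw⟩
    refine ⟨T.descSet x ∪ {u, p},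
      Set.union_subset hsub' (Set.insert_subset (hsub' hux) (by simpa using hsub hp)),
      .inr (by simp), .inl hxv, ?_⟩
    have hconn' := SimpleGraph.induce_union_connected (hconn x (mem_U hpx)).preconnected
      (SimpleGraph.induce_pair_connected_of_adj hup').preconnected ⟨u, hux, by simp⟩
    exact hconn'.preconnected _ _

theorem IsSTGOn.rotate (hT : IsSTGOn G U T) (hpc : T.parent c = some p) :
    IsSTGOn G U (T.rotate G hpc) := by
  have ⟨hsupp, hconn, hcomp⟩ := hT
  refine ⟨hsupp, fun a ha => ?_, fun u v hu hv huv => ?_⟩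
  · rw [descSet_rotate]
    by_cases hac : a = c
    · rw [hac, rotDescSet_self_right]
      exact hconn p (hsupp ▸ (T.mem_of_parent hpc).2)
    by_cases hap : a = p
    · rw [hap]
      exact hT.connected_induce_rotDescSet_self_left hpc
    · rw [rotDescSet_of_ne hac hap]
      exact hconn a ha
  · rcases hcomp u v hu hv huv with h | h
    · exact anc_rotate_or_anc_rotate hpc huv h
    · exact (anc_rotate_or_anc_rotate hpc huv.symm h).symm

end SearchTree

theorem rotation_preserves_search_tree_general {V : Type} [Fintype V]
    (G : SimpleGraph V)
    (T : RTree V) (hT : IsSTG G T) (p c : V) (hpc : T.parent c = some p) :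
    ∃ T' : RTree V, IsRotationAt G T T' p c ∧ IsSTG G T' :=
  ⟨T.rotate G hpc, RTree.isRotationAt_rotate hpc, IsSTGOn.rotate hT hpc⟩

/-- rotating an edge of a search tree on a connected graph yields a
search tree on the same graph. -/
theorem rotation_preserves_search_tree {V : Type} [Fintype V]
    (G : SimpleGraph V) (hG : G.Connected)
    (T : RTree V) (hT : IsSTG G T) (p c : V) (hpc : T.parent c = some p) :
    ∃ T' : RTree V, IsRotationAt G T T' p c ∧ IsSTG G T' :=
  rotation_preserves_search_tree_general G T hT p c hpc
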